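/- arXiv:2205.14681 — 3 statements merged into one kernel-verified Lean document; each statement's English description precedes it below -/
import Mathlib

section
/- Let K₁, K₂, K₃ be subsets of ℝ³ (with coordinates written p = (p₀, p₁, p₂)), let a < 0 < b be real numbers, and let n ∈ ℝ³. Suppose: p₁ > a·p₀ for all p ∈ K₁; p₁ > b·p₀ for all p ∈ K₂; p₁ < 0 for all p ∈ K₃; ⟪x, n⟫ < 0 for all x ∈ K₁; and ⟪x, n⟫ > 0 for all x ∈ K₂. Then for every u ∈ ℝ³ with u₁ = 0, u₀ > 0 and ⟪u, n⟫ > 0, no line with direction u intersects all three of K₁, K₂, K₃; that is, there is no p ∈ ℝ³ and t₁, t₂, t₃ ∈ ℝ with p + tᵢ • u ∈ Kᵢ for i = 1, 2, 3. -/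
open scoped RealInnerProductSpace

/-- **Lemma (three-set case of the path-building lemma).**
Let `K₁, K₂, K₃ ⊆ ℝ³`, `a < 0 < b`, and `n ∈ ℝ³` satisfy:
`p₁ > a·p₀` on `K₁`, `p₁ > b·p₀` on `K₂`, `p₁ < 0` on `K₃`, `⟪·, n⟫ < 0` on `K₁` and
`⟪·, n⟫ > 0` on `K₂`. Then no line whose direction `u` satisfies `u₁ = 0`, `u₀ > 0`
and `⟪u, n⟫ > 0` intersects all three of `K₁, K₂, K₃`. -/
theorem no_transversal_three_sets
    (K₁ K₂ K₃ : Set (EuclideanSpace ℝ (Fin 3)))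
    (a b : ℝ) (ha : a < 0) (hb : 0 < b)
    (n : EuclideanSpace ℝ (Fin 3))
    (h1 : ∀ p ∈ K₁, p 1 > a * p 0)
    (h2 : ∀ p ∈ K₂, p 1 > b * p 0)
    (h3 : ∀ p ∈ K₃, p 1 < 0)
    (h1n : ∀ x ∈ K₁, ⟪x, n⟫ < 0)
    (h2n : ∀ x ∈ K₂, ⟪x, n⟫ > 0)
    (u : EuclideanSpace ℝ (Fin 3))
    (hu1 : u 1 = 0) (hu0 : u 0 > 0) (hun : ⟪u, n⟫ > 0) :
    ¬ ∃ (p : EuclideanSpace ℝ (Fin 3)) (t₁ t₂ t₃ : ℝ),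
        p + t₁ • u ∈ K₁ ∧ p + t₂ • u ∈ K₂ ∧ p + t₃ • u ∈ K₃ := by
  rintro ⟨p, t₁, t₂, t₃, hq1, hq2, hq3⟩
  have e1 : ∀ t : ℝ, (p + t • u) 1 = p 1 := by
    intro t
    simp [PiLp.add_apply, PiLp.smul_apply, hu1]
  have e0 : ∀ t : ℝ, (p + t • u) 0 = p 0 + t * u 0 := by
    intro t
    simp [PiLp.add_apply, PiLp.smul_apply]
  have hp1 : p 1 < 0 := by have := h3 _ hq3; rwa [e1] at this
  have hA := h1 _ hq1; rw [e1, e0] at hA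
  have hB := h2 _ hq2; rw [e1, e0] at hB
  have hi1 : ⟪p, n⟫ + t₁ * ⟪u, n⟫ < 0 := by
    have := h1n _ hq1
    rwa [inner_add_left, real_inner_smul_left] at this
  have hi2 : ⟪p, n⟫ + t₂ * ⟪u, n⟫ > 0 := by
    have := h2n _ hq2
    rwa [inner_add_left, real_inner_smul_left] at this
  have hx1 : 0 < p 0 + t₁ * u 0 := by nlinarith
  have hx2 : p 0 + t₂ * u 0 < 0 := by nlinarith
  have hmul : t₂ * u 0 < t₁ * u 0 := by linarith
  have ht : t₂ < t₁ := lt_of_mul_lt_mul_right hmul hu0.le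
  nlinarith [mul_pos hun (sub_pos.mpr ht)]
end

section
/- For i ∈ {1, 2, 3}, let Sᵢ := {(i, t, i·t) : t ∈ [1,2]} ⊆ ℝ³ (the segment of the ruling line λᵢ = {x = i} ∩ Σ of the hyperbolic paraboloid Σ = {z = xy} bounded by the planes y = 1 and y = 2). Then for any p ∈ ℝ³ and any u ∈ ℝ³ with u ≠ 0, the line {p + t • u : t ∈ ℝ} intersects each of S₁, S₂, S₃ if and only if there exists b ∈ [1,2] such that {p + t • u : t ∈ ℝ} = {(s, b, s·b) : s ∈ ℝ}. In other words, the set of line transversals to {S₁, S₂, S₃} is exactly {ℓ_b : b ∈ [1,2]}, where ℓ_b := {(s, b, s·b) : s ∈ ℝ}. -/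
/-!
Points of a line whose `x`-coordinates are `1, 2, 3` are equally spaced along it, so the middle one
is the midpoint of the other two. For the points `(i, yᵢ, i yᵢ)` of `Σ` this forces
`y₁ + y₃ = 2 y₂` and `y₁ + 3 y₃ = 4 y₂`, hence `y₁ = y₂ = y₃ = b`, and the line is the ruling `ℓ_b`
through `(1, b, b)` and `(2, b, 2b)`.
-/

open Set

section ParamLine

variable (𝕜 : Type*) {E : Type*} [Field 𝕜] [AddCommGroup E] [Module 𝕜 E]

def paramLine (p u : E) : Set E := {x | ∃ t : 𝕜, x = p + t • u}

variable {𝕜}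

theorem paramLine_eq_of_mem {p u a b : E} (ha : a ∈ paramLine 𝕜 p u) (hb : b ∈ paramLine 𝕜 p u)
    (hab : a ≠ b) : paramLine 𝕜 p u = paramLine 𝕜 a (b - a) := by
  obtain ⟨t₁, rfl⟩ := ha
  obtain ⟨t₂, rfl⟩ := hb
  have ht : t₂ - t₁ ≠ 0 := sub_ne_zero.mpr fun h => hab (by rw [h])
  ext x
  constructor
  · rintro ⟨t, rfl⟩
    refine ⟨(t - t₁) / (t₂ - t₁), ?_⟩
    have : t = t₁ + (t - t₁) / (t₂ - t₁) * (t₂ - t₁) := by field_simp; ring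
    conv_lhs => rw [this]
    module
  · rintro ⟨s, rfl⟩
    exact ⟨t₁ + s * (t₂ - t₁), by module⟩

theorem paramLine_eq_paramLine {p u p' u' a b : E} (hab : a ≠ b)
    (ha : a ∈ paramLine 𝕜 p u) (hb : b ∈ paramLine 𝕜 p u)
    (ha' : a ∈ paramLine 𝕜 p' u') (hb' : b ∈ paramLine 𝕜 p' u') :
    paramLine 𝕜 p u = paramLine 𝕜 p' u' := by
  rw [paramLine_eq_of_mem ha hb hab, paramLine_eq_of_mem ha' hb' hab]

theorem add_eq_two_smul_of_map_add_eq (f : E →ₗ[𝕜] 𝕜) {p u a b c : E}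
    (ha : a ∈ paramLine 𝕜 p u) (hb : b ∈ paramLine 𝕜 p u) (hc : c ∈ paramLine 𝕜 p u)
    (hne : f a ≠ f b) (hf : f a + f c = 2 * f b) : a + c = (2 : 𝕜) • b := by
  obtain ⟨t₁, rfl⟩ := ha
  obtain ⟨t₂, rfl⟩ := hb
  obtain ⟨t₃, rfl⟩ := hc
  simp only [map_add, map_smul, smul_eq_mul] at hne hf
  have hfu : f u ≠ 0 := by rintro h; simp [h] at hne
  have ht : t₃ = 2 * t₂ - t₁ := mul_right_cancel₀ hfu (by linear_combination hf)
  rw [ht]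
  module

end ParamLine

noncomputable def paraboloidPoint (x y : ℝ) : EuclideanSpace ℝ (Fin 3) := !₂[x, y, x * y]

theorem eq_paraboloidPoint_iff {q : EuclideanSpace ℝ (Fin 3)} {x y : ℝ} :
    q = paraboloidPoint x y ↔ q 0 = x ∧ q 1 = y ∧ q 2 = x * y := by
  constructor
  · rintro rfl
    simp [paraboloidPoint]
  · rintro ⟨h0, h1, h2⟩
    ext i
    fin_cases i <;> simp [paraboloidPoint, h0, h1, h2]

theorem setOf_eq_image_paraboloidPoint (x : ℝ) (I : Set ℝ) :
    {q : EuclideanSpace ℝ (Fin 3) | ∃ y ∈ I, q 0 = x ∧ q 1 = y ∧ q 2 = x * y} =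
      paraboloidPoint x '' I := by
  ext q
  simp only [mem_ofPred_eq, mem_image, eq_comm (b := q), eq_paraboloidPoint_iff]

theorem paraboloidPoint_mem_paramLine (x y : ℝ) :
    paraboloidPoint x y ∈ paramLine ℝ (paraboloidPoint 0 y) !₂[1, 0, y] :=
  ⟨x, by rw [eq_comm, eq_paraboloidPoint_iff]; simp [paraboloidPoint]⟩

theorem setOf_eq_paramLine (y : ℝ) :
    {q : EuclideanSpace ℝ (Fin 3) | ∃ x, q 0 = x ∧ q 1 = y ∧ q 2 = x * y} =
      paramLine ℝ (paraboloidPoint 0 y) !₂[1, 0, y] := by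
  ext q
  constructor
  · rintro ⟨x, hq⟩
    exact eq_paraboloidPoint_iff.mpr hq ▸ paraboloidPoint_mem_paramLine x y
  · rintro ⟨x, rfl⟩
    refine ⟨x, ?_⟩
    simp [paraboloidPoint]

theorem eq_of_paraboloidPoint_mem_paramLine {p u : EuclideanSpace ℝ (Fin 3)} {y₁ y₂ y₃ : ℝ}
    (h₁ : paraboloidPoint 1 y₁ ∈ paramLine ℝ p u) (h₂ : paraboloidPoint 2 y₂ ∈ paramLine ℝ p u)
    (h₃ : paraboloidPoint 3 y₃ ∈ paramLine ℝ p u) : y₁ = y₂ ∧ y₃ = y₂ := by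
  have hmid := add_eq_two_smul_of_map_add_eq (EuclideanSpace.projₗ 0) h₁ h₂ h₃
    (by norm_num [paraboloidPoint]) (by norm_num [paraboloidPoint])
  have hy := congrArg (· 1) hmid
  have hz := congrArg (· 2) hmid
  simp only [paraboloidPoint, PiLp.add_apply, PiLp.smul_apply, smul_eq_mul, Matrix.cons_val,
    Matrix.cons_val_one, Matrix.cons_val_zero, one_mul] at hy hz
  constructor <;> linarith

theorem paramLine_eq_of_paraboloidPoint_mem {p u : EuclideanSpace ℝ (Fin 3)} {y : ℝ}
    (h₁ : paraboloidPoint 1 y ∈ paramLine ℝ p u) (h₂ : paraboloidPoint 2 y ∈ paramLine ℝ p u) :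
    paramLine ℝ p u = paramLine ℝ (paraboloidPoint 0 y) !₂[1, 0, y] :=
  paramLine_eq_paramLine (by rw [Ne, eq_paraboloidPoint_iff]; norm_num [paraboloidPoint]) h₁ h₂
    (paraboloidPoint_mem_paramLine 1 y) (paraboloidPoint_mem_paramLine 2 y)

theorem transversals_to_three_ruling_segments_general
    (S : ℝ → Set (EuclideanSpace ℝ (Fin 3)))
    (hS : ∀ a : ℝ, S a = {q | ∃ t ∈ Set.Icc (1 : ℝ) 2,
        q 0 = a ∧ q 1 = t ∧ q 2 = a * t})
    (ℓ : ℝ → Set (EuclideanSpace ℝ (Fin 3)))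
    (hℓ : ∀ b : ℝ, ℓ b = {q | ∃ s : ℝ, q 0 = s ∧ q 1 = b ∧ q 2 = s * b})
    (p u : EuclideanSpace ℝ (Fin 3)) :
    ((∃ t : ℝ, p + t • u ∈ S 1) ∧ (∃ t : ℝ, p + t • u ∈ S 2) ∧
        (∃ t : ℝ, p + t • u ∈ S 3)) ↔
      ∃ b ∈ Set.Icc (1 : ℝ) 2, {x : EuclideanSpace ℝ (Fin 3) | ∃ t : ℝ, x = p + t • u} = ℓ b := by
  have hmeet (a : ℝ) : (∃ t : ℝ, p + t • u ∈ S a) ↔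
      ∃ y ∈ Icc (1 : ℝ) 2, paraboloidPoint a y ∈ paramLine ℝ p u := by
    simp only [hS, setOf_eq_image_paraboloidPoint, mem_image, paramLine, mem_ofPred_eq]
    exact ⟨fun ⟨t, y, hy, ht⟩ => ⟨y, hy, t, ht⟩, fun ⟨y, hy, t, ht⟩ => ⟨t, y, hy, ht⟩⟩
  change _ ↔ ∃ b ∈ Icc (1 : ℝ) 2, paramLine ℝ p u = ℓ b
  simp only [hmeet, hℓ, setOf_eq_paramLine]
  constructor
  · rintro ⟨⟨y₁, -, h₁⟩, ⟨y₂, hy₂, h₂⟩, ⟨y₃, -, h₃⟩⟩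
    rw [(eq_of_paraboloidPoint_mem_paramLine h₁ h₂ h₃).1] at h₁
    exact ⟨y₂, hy₂, paramLine_eq_of_paraboloidPoint_mem h₁ h₂⟩
  · rintro ⟨b, hb, hline⟩
    have hmem (a : ℝ) : paraboloidPoint a b ∈ paramLine ℝ p u :=
      hline ▸ paraboloidPoint_mem_paramLine a b
    exact ⟨⟨b, hb, hmem 1⟩, ⟨b, hb, hmem 2⟩, ⟨b, hb, hmem 3⟩⟩

/-- **Lemma (transversals to three rulings of the hyperbolic paraboloid).**
For `i = 1, 2, 3` let `Sᵢ = {(i, t, i·t) : t ∈ [1,2]} ⊆ ℝ³` be the segment of the ruling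
line `λᵢ = {x = i} ∩ Σ` of the hyperbolic paraboloid `Σ = {z = x·y}` bounded by the
planes `y = 1` and `y = 2`. Then a line `{p + t • u : t ∈ ℝ}` (with `u ≠ 0`) intersects
each of `S₁, S₂, S₃` if and only if it equals `ℓ_b = {(s, b, s·b) : s ∈ ℝ}` for some
`b ∈ [1,2]`. -/
theorem transversals_to_three_ruling_segments
    (S : ℝ → Set (EuclideanSpace ℝ (Fin 3)))
    (hS : ∀ a : ℝ, S a = {q | ∃ t ∈ Set.Icc (1 : ℝ) 2,
        q 0 = a ∧ q 1 = t ∧ q 2 = a * t})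
    (ℓ : ℝ → Set (EuclideanSpace ℝ (Fin 3)))
    (hℓ : ∀ b : ℝ, ℓ b = {q | ∃ s : ℝ, q 0 = s ∧ q 1 = b ∧ q 2 = s * b})
    (p u : EuclideanSpace ℝ (Fin 3)) (hu : u ≠ 0) :
    ((∃ t : ℝ, p + t • u ∈ S 1) ∧ (∃ t : ℝ, p + t • u ∈ S 2) ∧
        (∃ t : ℝ, p + t • u ∈ S 3)) ↔
      ∃ b ∈ Set.Icc (1 : ℝ) 2, {x : EuclideanSpace ℝ (Fin 3) | ∃ t : ℝ, x = p + t • u} = ℓ b :=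
  transversals_to_three_ruling_segments_general S hS ℓ hℓ p u
end

section
/- Let C be a compact subset of the interval [1,2] and let Ĉ := {(1/(c−4), c, c/(c−4)) : c ∈ C} ⊆ ℝ³. Then the intersection of the convex hull of Ĉ with the hyperbolic paraboloid Σ = {(x, y, z) : z = x·y} is exactly Ĉ; that is, (convexHull ℝ Ĉ) ∩ Σ = Ĉ. -/
/-!
Every point of `Ĉ` lies on the plane `z = 4x + 1`, hence so does its convex hull, and on that
plane `Σ` cuts out the hyperbola `x (y - 4) = 1`. A point `(1/(a-4), a, ·)` of this hyperbola with
`a ∉ C` is cut off from `Ĉ` by the open half-space `x + y/(a-4)² < 1/(a-4) + a/(a-4)²`, whose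
boundary projects to the tangent line of `t ↦ 1/(t-4)` at `a`; this line lies strictly above the
branch `t < 4`, on which all of `Ĉ` lies, except at `t = a`.
-/

open Set

lemma one_div_sub_add_lt_tangent {a b c : ℝ} (ha : a ≠ b) (hc : c < b) (hca : c ≠ a) :
    1 / (c - b) + c / (a - b) ^ 2 < 1 / (a - b) + a / (a - b) ^ 2 := by
  have hab : a - b ≠ 0 := sub_ne_zero.mpr ha
  have hcb : c - b ≠ 0 := (sub_neg.mpr hc).ne
  have key : (1 / (a - b) + a / (a - b) ^ 2 - (1 / (c - b) + c / (a - b) ^ 2))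
      * ((b - c) * (a - b) ^ 2) = (a - c) ^ 2 := by
    field_simp
    ring
  have hpos : 0 < (b - c) * (a - b) ^ 2 := by
    have := sub_pos.mpr hc
    positivity
  have hsq : 0 < (a - c) ^ 2 := sq_pos_of_ne_zero (sub_ne_zero.mpr hca.symm)
  exact sub_pos.mp (pos_of_mul_pos_left (key ▸ hsq) hpos.le)

lemma isLinearMap_coord_add_mul_coord {ι : Type*} (i j : ι) (b : ℝ) :
    IsLinearMap ℝ fun p : EuclideanSpace ℝ ι => p i + b * p j :=
  ⟨fun p q => by simp only [PiLp.add_apply]; ring,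
    fun r p => by simp only [PiLp.smul_apply, smul_eq_mul]; ring⟩

def liftedCurve (C : Set ℝ) : Set (EuclideanSpace ℝ (Fin 3)) :=
  {q | ∃ c ∈ C, q 0 = 1 / (c - 4) ∧ q 1 = c ∧ q 2 = c / (c - 4)}

section LiftedCurve

variable {C : Set ℝ}

lemma liftedCurve_subset_paraboloid : liftedCurve C ⊆ {q | q 2 = q 0 * q 1} := by
  rintro q ⟨c, -, h0, h1, h2⟩
  simp only [mem_ofPred_eq, h0, h1, h2]
  ring

lemma convexHull_liftedCurve_subset_plane (hC : ∀ c ∈ C, c < 4) :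
    convexHull ℝ (liftedCurve C) ⊆ {q | q 2 + -4 * q 0 = 1} := by
  refine convexHull_min ?_ (convex_hyperplane (isLinearMap_coord_add_mul_coord 2 0 _) 1)
  rintro q ⟨c, hcC, h0, -, h2⟩
  have hc4 : c - 4 ≠ 0 := (sub_neg.mpr (hC c hcC)).ne
  simp only [mem_ofPred_eq, h0, h2]
  field_simp
  ring

lemma convexHull_liftedCurve_subset_halfSpace (hC : ∀ c ∈ C, c < 4) {a : ℝ} (ha : a ≠ 4)
    (haC : a ∉ C) :
    convexHull ℝ (liftedCurve C) ⊆
      {q | q 0 + 1 / (a - 4) ^ 2 * q 1 < 1 / (a - 4) + a / (a - 4) ^ 2} := by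
  refine convexHull_min ?_ (convex_halfSpace_lt (isLinearMap_coord_add_mul_coord 0 1 _) _)
  rintro q ⟨c, hcC, h0, h1, -⟩
  simp only [mem_ofPred_eq, h0, h1, one_div_mul_eq_div]
  exact one_div_sub_add_lt_tangent ha (hC c hcC) (ne_of_mem_of_not_mem hcC haC)

lemma mem_of_mem_convexHull_liftedCurve (hC : ∀ c ∈ C, c < 4) {q : EuclideanSpace ℝ (Fin 3)}
    (hq : q ∈ convexHull ℝ (liftedCurve C)) (hq0 : q 0 = 1 / (q 1 - 4)) (hq1 : q 1 ≠ 4) :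
    q 1 ∈ C := by
  by_contra hq1C
  have hlt := convexHull_liftedCurve_subset_halfSpace hC hq1 hq1C hq
  rw [mem_ofPred_eq, hq0, one_div_mul_eq_div] at hlt
  exact lt_irrefl _ hlt

end LiftedCurve

theorem convexHull_inter_paraboloid_general
    (C : Set ℝ) (hCsub : C ⊆ Set.Icc (1 : ℝ) 2)
    (Chat : Set (EuclideanSpace ℝ (Fin 3)))
    (hChat : Chat = {q | ∃ c ∈ C,
        q 0 = 1 / (c - 4) ∧ q 1 = c ∧ q 2 = c / (c - 4)})
    (Sig : Set (EuclideanSpace ℝ (Fin 3)))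
    (hSig : Sig = {q | q 2 = q 0 * q 1}) :
    (convexHull ℝ Chat) ∩ Sig = Chat := by
  subst hChat hSig
  change convexHull ℝ (liftedCurve C) ∩ _ = liftedCurve C
  have hC : ∀ c ∈ C, c < 4 := fun c hc => (hCsub hc).2.trans_lt (by norm_num)
  refine Subset.antisymm ?_ fun p hp =>
    ⟨subset_convexHull ℝ _ hp, liftedCurve_subset_paraboloid hp⟩
  rintro q ⟨hq, hqSig : q 2 = q 0 * q 1⟩
  have hplane : q 2 + -4 * q 0 = 1 := convexHull_liftedCurve_subset_plane hC hq
  have hhyp : q 0 * (q 1 - 4) = 1 := by linear_combination hplane - hqSig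
  have hq1 : q 1 - 4 ≠ 0 := right_ne_zero_of_mul_eq_one hhyp
  have hq0 : q 0 = 1 / (q 1 - 4) := eq_one_div_of_mul_eq_one_left hhyp
  refine ⟨q 1, mem_of_mem_convexHull_liftedCurve hC hq hq0 (sub_ne_zero.mp hq1), hq0, rfl, ?_⟩
  rw [hqSig, hq0]
  ring

/-- **Lemma (convex hull of a curve on the hyperbolic paraboloid).**
Let `C ⊆ [1,2]` be compact and `Ĉ = {(1/(c−4), c, c/(c−4)) : c ∈ C} ⊆ ℝ³`.
Then the intersection of the convex hull of `Ĉ` with the hyperbolic paraboloid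
`Σ = {(x, y, z) : z = x·y}` is exactly `Ĉ`. -/
theorem convexHull_inter_paraboloid
    (C : Set ℝ) (hC : IsCompact C) (hCsub : C ⊆ Set.Icc (1 : ℝ) 2)
    (Chat : Set (EuclideanSpace ℝ (Fin 3)))
    (hChat : Chat = {q | ∃ c ∈ C,
        q 0 = 1 / (c - 4) ∧ q 1 = c ∧ q 2 = c / (c - 4)})
    (Sig : Set (EuclideanSpace ℝ (Fin 3)))
    (hSig : Sig = {q | q 2 = q 0 * q 1}) :
    (convexHull ℝ Chat) ∩ Sig = Chat :=
  convexHull_inter_paraboloid_general C hCsub Chat hChat Sig hSig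
end
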